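/- Let f be a Boolean function over a finite variable set X and T a vtree over X. Then every TDD respecting T that computes f has, for every node t of T, at least S_t t-nodes, where S_t is the number of non-trivial X_t-subfunctions of f. -/

import Mathlib

/-- A vtree: a rooted binary tree whose leaves are labeled by variables. -/
inductive Vtree (V : Type) where
  | leaf : V → Vtree V
  | node : Vtree V → Vtree V → Vtree V

namespace Vtree

variable {V : Type} [DecidableEq V]

/-- The set of variables labeling the leaves of a vtree. -/
def vars : Vtree V → Finset V
  | leaf x => {x}
  | node l r => l.vars ∪ r.vars

/-- A vtree is proper when its leaves carry pairwise distinct variables,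
so that the leaves are in one-to-one correspondence with `vars`. -/
def Proper : Vtree V → Prop
  | leaf _ => True
  | node l r => l.Proper ∧ r.Proper ∧ Disjoint l.vars r.vars

/-- `T.IsNode t` : `t` is (the subtree rooted at) a node of `T`. -/
def IsNode : Vtree V → Vtree V → Prop
  | leaf x, t => t = leaf x
  | node l r, t => t = node l r ∨ l.IsNode t ∨ r.IsNode t

/-- Remove every leaf whose variable is in `Y`, suppressing unary nodes.
Returns `none` if no leaf survives. -/
def restrict (Y : Finset V) : Vtree V → Option (Vtree V)
  | leaf x => if x ∈ Y then none else some (leaf x)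
  | node l r =>
    match l.restrict Y, r.restrict Y with
    | none, o => o
    | some l', none => some l'
    | some l', some r' => some (node l' r')

/-- The vtree `T ∖ x`. -/
def remove (x : V) (T : Vtree V) : Option (Vtree V) := T.restrict {x}

/-- A vtree is linear when every internal node has a leaf child. -/
def Linear : Vtree V → Prop
  | leaf _ => True
  | node l r => ((∃ x, l = leaf x) ∨ (∃ x, r = leaf x)) ∧ l.Linear ∧ r.Linear

/-- The variable order induced by a linear vtree. -/
def order : Vtree V → List V
  | leaf x => [x]
  | node (leaf x) r => x :: r.order
  | node l (leaf x) => x :: l.order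
  | node l r => l.order ++ r.order

end Vtree

/-- Labels of leaf-layer nodes of a TDD: the positive literal, the negative
literal, and the constants 1 and 0. -/
inductive TLab where
  | pos | neg | one | zero
deriving DecidableEq

/-- Disjunction of two leaf labels (used when contracting twin leaf nodes). -/
def TLab.lor : TLab → TLab → TLab
  | .zero, a => a
  | a, .zero => a
  | .one, _ => .one
  | _, .one => .one
  | .pos, .pos => .pos
  | .neg, .neg => .neg
  | .pos, .neg => .one
  | .neg, .pos => .one

/-- A (non-deterministic) tree decision diagram structured along a vtree:
one layer of nodes (identified by natural numbers) per vtree node; leaf-layer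
nodes carry labels, internal-layer nodes carry their sets of input pairs. -/
inductive NTDD (V : Type) where
  | leaf (x : V) (ns : Finset ℕ) (lab : ℕ → TLab)
  | node (l r : NTDD V) (ns : Finset ℕ) (E : ℕ → Finset (ℕ × ℕ))

namespace NTDD

variable {V : Type}

/-- The vtree that an nTDD is structured along. -/
def shape : NTDD V → Vtree V
  | leaf x _ _ => .leaf x
  | node l r _ _ => .node l.shape r.shape

/-- The set of nodes of the top (root) layer. -/
def nodes : NTDD V → Finset ℕ
  | leaf _ ns _ => ns
  | node _ _ ns _ => ns

/-- The size of an nTDD: the total number of input pairs. -/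
def size : NTDD V → ℕ
  | leaf _ _ _ => 0
  | node l r ns E => l.size + r.size + ∑ g ∈ ns, (E g).card

/-- The width of an nTDD: the maximal cardinality of a layer. -/
def width : NTDD V → ℕ
  | leaf _ ns _ => ns.card
  | node l r ns _ => max ns.card (max l.width r.width)

/-- `C.sat g τ` : (the restriction of) the assignment `τ` is a model of the
function `f_g` computed by the top-layer node `g` of `C`. -/
def sat : NTDD V → ℕ → (V → Bool) → Prop
  | leaf x _ lab, g, τ =>
    match lab g with
    | .pos => τ x = true
    | .neg => τ x = false
    | .one => True
    | .zero => False
  | node l r _ E, g, τ => ∃ p ∈ E g, l.sat p.1 τ ∧ r.sat p.2 τ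

/-- Well-formedness: input pairs of top-layer nodes reference nodes of the
children layers. -/
def WF : NTDD V → Prop
  | leaf _ _ _ => True
  | node l r ns E => l.WF ∧ r.WF ∧ ∀ g ∈ ns, ∀ p ∈ E g, p.1 ∈ l.nodes ∧ p.2 ∈ r.nodes

/-- Determinism, turning an nTDD into a TDD: at each leaf layer at most one
node labeled by each of `x`, `¬x`, `1`, and if a node is labeled `1` then all
other nodes are labeled `0`; at each internal layer every pair is the input of
at most one node. -/
def Det : NTDD V → Prop
  | leaf _ ns lab =>
      (∀ g ∈ ns, ∀ g' ∈ ns, lab g = TLab.pos → lab g' = TLab.pos → g = g') ∧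
      (∀ g ∈ ns, ∀ g' ∈ ns, lab g = TLab.neg → lab g' = TLab.neg → g = g') ∧
      (∀ g ∈ ns, ∀ g' ∈ ns, lab g = TLab.one → lab g' = TLab.one → g = g') ∧
      (∀ g ∈ ns, lab g = TLab.one → ∀ g' ∈ ns, g' ≠ g → lab g' = TLab.zero)
  | node l r ns E => l.Det ∧ r.Det ∧ ∀ g ∈ ns, ∀ g' ∈ ns, g ≠ g' → Disjoint (E g) (E g')

/-- `C.Subdiagram D` : `D` is the sub-diagram of `C` sitting at some node of
the underlying vtree (including `C` itself). -/
def Subdiagram : NTDD V → NTDD V → Prop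
  | leaf x ns lab, D => D = leaf x ns lab
  | node l r ns E, D => D = node l r ns E ∨ l.Subdiagram D ∨ r.Subdiagram D

/-- A TDD is full if, at every layer, every assignment is a model of some node
of that layer. -/
def Full (C : NTDD V) : Prop :=
  ∀ D : NTDD V, C.Subdiagram D → ∀ τ : V → Bool, ∃ g ∈ D.nodes, D.sat g τ

end NTDD

/-- A choice of one node id per vtree node, mirroring the vtree: the data of a
certificate. -/
inductive IdTree where
  | leaf (g : ℕ)
  | node (g : ℕ) (l r : IdTree)

/-- The id chosen at the root. -/
def IdTree.root : IdTree → ℕ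
  | .leaf g => g
  | .node g _ _ => g

namespace NTDD

variable {V : Type}

/-- `C.IsCert P τ` : the choice `P` of one node per layer is a certificate for
`τ` in `C` (except for the root condition `P.root = out`, stated separately):
at a leaf labeled `x` the chosen node is labeled `1` or by a literal satisfied
by `τ`, and at an internal node the chosen pair of children nodes is an input
of the chosen node. -/
def IsCert : NTDD V → IdTree → (V → Bool) → Prop
  | leaf x ns lab, IdTree.leaf g, τ =>
      g ∈ ns ∧ (lab g = TLab.one ∨ (lab g = TLab.pos ∧ τ x = true) ∨
        (lab g = TLab.neg ∧ τ x = false))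
  | node l r ns E, IdTree.node g pl pr, τ =>
      g ∈ ns ∧ (pl.root, pr.root) ∈ E g ∧ l.IsCert pl τ ∧ r.IsCert pr τ
  | _, _, _ => False

/-- `SubPair C P D Q` : `D` is the sub-diagram of `C` at some vtree node `t`,
and `Q` is the corresponding part of the certificate data `P` (so `Q.root` is
the node that `P` chooses at `t`). -/
def SubPair : NTDD V → IdTree → NTDD V → IdTree → Prop
  | leaf x ns lab, P, D, Q => D = leaf x ns lab ∧ Q = P
  | node l r ns E, P, D, Q =>
      (D = node l r ns E ∧ Q = P) ∨
      (match P with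
       | IdTree.node _ pl pr => l.SubPair pl D Q ∨ r.SubPair pr D Q
       | _ => False)

/-- Contract the two top-layer nodes `g1, g1'` into the fresh node `v`. -/
def contractLayer (g1 g1' v : ℕ) : NTDD V → NTDD V
  | leaf x ns lab =>
      leaf x (insert v ((ns.erase g1).erase g1'))
        (fun g => if g = v then (lab g1).lor (lab g1') else lab g)
  | node l r ns E =>
      node l r (insert v ((ns.erase g1).erase g1'))
        (fun g => if g = v then E g1 ∪ E g1' else E g)

/-- Twin contraction of nodes `g1, g1'` of the left child layer into `v`:
they are merged in the left layer, and every input pair `(g1, g2)` or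
`(g1', g2)` of a top-layer node is replaced by `(v, g2)`. -/
def contractAtL (g1 g1' v : ℕ) : NTDD V → NTDD V
  | node l r ns E =>
      node (l.contractLayer g1 g1' v) r ns
        (fun g => (E g).image (fun p => if p.1 = g1 ∨ p.1 = g1' then (v, p.2) else p))
  | C => C

/-- Twin contraction of nodes `g1, g1'` of the right child layer into `v`. -/
def contractAtR (g1 g1' v : ℕ) : NTDD V → NTDD V
  | node l r ns E =>
      node l (r.contractLayer g1 g1' v) ns
        (fun g => (E g).image (fun p => if p.2 = g1 ∨ p.2 = g1' then (p.1, v) else p))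
  | C => C

open Classical in
/-- Replace the sub-diagram `D` of `C` by `D'` (in a proper vtree, sub-diagrams
at distinct positions are distinct, so this is unambiguous). -/
noncomputable def replace : NTDD V → NTDD V → NTDD V → NTDD V
  | leaf x ns lab, D, D' => if leaf x ns lab = D then D' else leaf x ns lab
  | node l r ns E, D, D' =>
      if node l r ns E = D then D'
      else node (l.replace D D') (r.replace D D') ns E

/-- `g1` and `g1'` are twins of the left child layer: they have the same
siblings with respect to every top-layer node. -/
def TwinsL (g1 g1' : ℕ) : NTDD V → Prop
  | node l _ ns E => g1 ∈ l.nodes ∧ g1' ∈ l.nodes ∧ g1 ≠ g1' ∧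
      ∀ g ∈ ns, ∀ g2 : ℕ, ((g1, g2) ∈ E g ↔ (g1', g2) ∈ E g)
  | _ => False

/-- `g1` and `g1'` are twins of the right child layer. -/
def TwinsR (g1 g1' : ℕ) : NTDD V → Prop
  | node _ r ns E => g1 ∈ r.nodes ∧ g1' ∈ r.nodes ∧ g1 ≠ g1' ∧
      ∀ g ∈ ns, ∀ g2 : ℕ, ((g2, g1) ∈ E g ↔ (g2, g1') ∈ E g)
  | _ => False

/-- The node set of the left child layer. -/
def leftNodes : NTDD V → Finset ℕ
  | node l _ _ _ => l.nodes
  | _ => ∅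

/-- The node set of the right child layer. -/
def rightNodes : NTDD V → Finset ℕ
  | node _ r _ _ => r.nodes
  | _ => ∅

end NTDD

/-- The number of distinct non-trivial `Y`-subfunctions of the Boolean
function `f` : functions of the form `σ ↦ f (Y.piecewise τ σ)` for some
`τ`, having at least one model. -/
noncomputable def subCount {V : Type} [DecidableEq V] (f : (V → Bool) → Prop) (Y : Finset V) : ℕ :=
  Nat.card {h : (V → Bool) → Prop |
    (∃ τ : V → Bool, h = fun σ => f (Y.piecewise τ σ)) ∧ ∃ σ : V → Bool, h σ}

/-- The number of distinct `Y`-subfunctions of `f` (trivial ones included). -/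
noncomputable def subCountAll {V : Type} [DecidableEq V] (f : (V → Bool) → Prop) (Y : Finset V) : ℕ :=
  Nat.card {h : (V → Bool) → Prop |
    ∃ τ : V → Bool, h = fun σ => f (Y.piecewise τ σ)}

/-!
Let `D` be the layer of a TDD `C` at a vtree node `t`, and `Y = X_t`. Every model `τ` of `f` is
accepted by `C` through a node `q` of `D` accepting `τ`. Determinism makes that node unique, so
if `q` also accepts `τ'` the accepting run of `τ` can be re-routed below `q` to accept `τ'` on `Y`
and `τ` off `Y`. Hence all assignments accepted at `q` have the same `Y`-subfunction, and each
non-trivial `Y`-subfunction is obtained from some node of `D`.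
-/

theorem subCount_le_card_of_cover {V ι : Type} [DecidableEq V]
    {f : (V → Bool) → Prop} {Y : Finset V} {s : Finset ι} {R : ι → (V → Bool) → Prop}
    (hcover : ∀ ρ, f ρ → ∃ q ∈ s, R q ρ)
    (hclass : ∀ q ∈ s, ∀ ρ₁ ρ₂ σ, R q ρ₁ → R q ρ₂ →
      f (Y.piecewise ρ₁ σ) → f (Y.piecewise ρ₂ σ)) :
    subCount f Y ≤ s.card := by
  -- by `hclass`, `φ q` is the common `Y`-subfunction of all assignments accepted at `q`
  let φ : ι → (V → Bool) → Prop := fun q σ => ∃ ρ, R q ρ ∧ f (Y.piecewise ρ σ)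
  have hsub : {h : (V → Bool) → Prop |
      (∃ τ : V → Bool, h = fun σ => f (Y.piecewise τ σ)) ∧ ∃ σ : V → Bool, h σ} ⊆
      φ '' s := by
    rintro _ ⟨⟨τ, rfl⟩, σ, hσ⟩
    obtain ⟨q, hq, hR⟩ := hcover _ hσ
    refine ⟨q, hq, funext fun σ' => propext ⟨?_, fun h => ?_⟩⟩
    · rintro ⟨ρ, hρ, hf⟩
      simpa only [Finset.piecewise_idem_left] using hclass q hq ρ _ σ' hρ hR hf
    · exact ⟨_, hR, by rwa [Finset.piecewise_idem_left]⟩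
  calc subCount f Y ≤ (φ '' s).ncard := Set.ncard_le_ncard hsub (s.finite_toSet.image φ)
    _ ≤ (s : Set ι).ncard := Set.ncard_image_le s.finite_toSet
    _ = s.card := Set.ncard_coe_finset s

namespace NTDD

variable {V : Type}

theorem eq_of_sat_of_sat {C : NTDD V} (hWF : C.WF) (hDet : C.Det) {g g' : ℕ} {τ : V → Bool}
    (hg : g ∈ C.nodes) (hg' : g' ∈ C.nodes) (h : C.sat g τ) (h' : C.sat g' τ) : g = g' := by
  induction C generalizing g g' with
  | leaf x ns lab =>
    obtain ⟨hpos, hneg, hone, hzero⟩ := hDet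
    by_contra hne
    cases hl : lab g <;> cases hl' : lab g' <;> simp only [sat, hl, hl'] at h h' <;>
      first
      | exact hne (hpos g hg g' hg' hl hl')
      | exact hne (hneg g hg g' hg' hl hl')
      | exact hne (hone g hg g' hg' hl hl')
      | simp [h] at h'
      | simpa [hl'] using hzero g hg hl g' hg' (Ne.symm hne)
      | simpa [hl] using hzero g' hg' hl' g hg hne
  | node l r ns E ihl ihr =>
    obtain ⟨hWl, hWr, hE⟩ := hWF
    obtain ⟨hDl, hDr, hdisj⟩ := hDet
    obtain ⟨p, hp, hpl, hpr⟩ := h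
    obtain ⟨p', hp', hpl', hpr'⟩ := h'
    obtain ⟨hp1, hp2⟩ := hE g hg p hp
    obtain ⟨hp1', hp2'⟩ := hE g' hg' p' hp'
    have hpp' : p = p' :=
      Prod.ext (ihl hWl hDl hp1 hp1' hpl hpl') (ihr hWr hDr hp2 hp2' hpr hpr')
    by_contra hne
    exact Finset.disjoint_left.mp (hdisj g hg g' hg' hne) hp (hpp' ▸ hp')

theorem Subdiagram.exists_sat {C D : NTDD V} (hD : C.Subdiagram D) (hWF : C.WF) {g : ℕ}
    {τ : V → Bool} (hg : g ∈ C.nodes) (h : C.sat g τ) : ∃ q ∈ D.nodes, D.sat q τ := by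
  induction C generalizing g with
  | leaf x ns lab =>
    obtain rfl : D = leaf x ns lab := hD
    exact ⟨g, hg, h⟩
  | node l r ns E ihl ihr =>
    obtain ⟨p, hp, hpl, hpr⟩ := h
    obtain ⟨hp1, hp2⟩ := hWF.2.2 g hg p hp
    rcases hD with rfl | hD | hD
    · exact ⟨g, hg, p, hp, hpl, hpr⟩
    · exact ihl hD hWF.1 hp1 hpl
    · exact ihr hD hWF.2.1 hp2 hpr

variable [DecidableEq V]

theorem Subdiagram.vars_subset {C D : NTDD V} (hD : C.Subdiagram D) :
    D.shape.vars ⊆ C.shape.vars := by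
  induction C with
  | leaf x ns lab =>
    obtain rfl : D = leaf x ns lab := hD
    rfl
  | node l r ns E ihl ihr =>
    rcases hD with rfl | hD | hD
    · rfl
    · exact (ihl hD).trans Finset.subset_union_left
    · exact (ihr hD).trans Finset.subset_union_right

theorem sat_congr {C : NTDD V} {g : ℕ} {τ τ' : V → Bool}
    (hτ : ∀ x ∈ C.shape.vars, τ x = τ' x) (h : C.sat g τ) : C.sat g τ' := by
  induction C generalizing g with
  | leaf x ns lab =>
    have hx : τ x = τ' x := hτ x (Finset.mem_singleton_self x)
    cases hl : lab g <;> simp_all [sat]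
  | node l r ns E ihl ihr =>
    obtain ⟨p, hp, hpl, hpr⟩ := h
    exact ⟨p, hp, ihl (fun x hx => hτ x (Finset.mem_union_left _ hx)) hpl,
      ihr (fun x hx => hτ x (Finset.mem_union_right _ hx)) hpr⟩

theorem sat_of_subdiagram_sat {C D : NTDD V} (hD : C.Subdiagram D) (hP : C.shape.Proper)
    (hWF : C.WF) (hDet : C.Det) {g q : ℕ} {τ τ' : V → Bool} (hg : g ∈ C.nodes)
    (hq : q ∈ D.nodes) (h : C.sat g τ) (hqτ : D.sat q τ) (hqτ' : D.sat q τ')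
    (hτ : ∀ x ∉ D.shape.vars, τ x = τ' x) : C.sat g τ' := by
  induction C generalizing g with
  | leaf x ns lab =>
    obtain rfl : D = leaf x ns lab := hD
    rwa [eq_of_sat_of_sat hWF hDet hg hq h hqτ]
  | node l r ns E ihl ihr =>
    obtain ⟨hPl, hPr, hlr⟩ := hP
    obtain ⟨p, hp, hpl, hpr⟩ := h
    obtain ⟨hp1, hp2⟩ := hWF.2.2 g hg p hp
    rcases hD with rfl | hD | hD
    · rwa [eq_of_sat_of_sat hWF hDet hg hq ⟨p, hp, hpl, hpr⟩ hqτ]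
    · refine ⟨p, hp, ihl hD hPl hWF.1 hDet.1 hp1 hpl, sat_congr (fun x hx => hτ x ?_) hpr⟩
      exact fun hxD => Finset.disjoint_left.mp hlr (hD.vars_subset hxD) hx
    · refine ⟨p, hp, sat_congr (fun x hx => hτ x ?_) hpl, ihr hD hPr hWF.2.1 hDet.2.1 hp2 hpr⟩
      exact fun hxD => Finset.disjoint_left.mp hlr hx (hD.vars_subset hxD)

end NTDD

theorem stmt10_general {V : Type} [DecidableEq V] (T : Vtree V)
    (hTp : T.Proper)
    (f : (V → Bool) → Prop)
    (C : NTDD V) (out : ℕ) (hsh : C.shape = T) (hWF : C.WF) (hDet : C.Det)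
    (hout : out ∈ C.nodes)
    (hcomp : ∀ τ : V → Bool, (C.sat out τ ↔ f τ)) :
    ∀ D : NTDD V, C.Subdiagram D → subCount f D.shape.vars ≤ D.nodes.card := by
  intro D hD
  refine subCount_le_card_of_cover (R := D.sat)
    (fun ρ hρ => hD.exists_sat hWF hout ((hcomp ρ).2 hρ)) ?_
  intro q hq ρ₁ ρ₂ σ hρ₁ hρ₂ hf
  have hagree : ∀ ρ, D.sat q ρ → D.sat q (D.shape.vars.piecewise ρ σ) := fun ρ hρ =>
    NTDD.sat_congr (fun x hx => (Finset.piecewise_eq_of_mem _ _ _ hx).symm) hρ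
  rw [← hcomp] at hf ⊢
  exact NTDD.sat_of_subdiagram_sat hD (hsh ▸ hTp) hWF hDet hout hq hf (hagree ρ₁ hρ₁)
    (hagree ρ₂ hρ₂) fun x hx => by
      simp only [Finset.piecewise_eq_of_notMem _ _ _ hx]

/-- Lower bound: every TDD respecting a vtree `T` over `X`
that computes a Boolean function `f` over `X` has, for every node `t` of `T`
(given as the sub-diagram `D` at `t`), at least `S_t` `t`-nodes, where `S_t`
is the number of non-trivial `X_t`-subfunctions of `f`. -/
theorem stmt10 {V : Type} [DecidableEq V] (X : Finset V) (T : Vtree V)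
    (hTp : T.Proper) (hTX : T.vars = X)
    (f : (V → Bool) → Prop)
    (hf : ∀ τ σ : V → Bool, (∀ x ∈ X, τ x = σ x) → (f τ ↔ f σ))
    (C : NTDD V) (out : ℕ) (hsh : C.shape = T) (hWF : C.WF) (hDet : C.Det)
    (hout : out ∈ C.nodes)
    (hcomp : ∀ τ : V → Bool, (C.sat out τ ↔ f τ)) :
    ∀ D : NTDD V, C.Subdiagram D → subCount f D.shape.vars ≤ D.nodes.card :=
  stmt10_general T hTp f C out hsh hWF hDet hout hcomp
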